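/- arXiv:2103.07232 — 2 statements merged into one kernel-verified Lean document; each statement's English description precedes it below -/
import Mathlib

section
/- For every α > 0, if v₍α₎ ∈ C²(closure(Ω)) is the nonnegative solution of Δv = α v e^v in Ω with v = v⋆ on ∂Ω, and v' ∈ C²(closure(Ω)) solves Δv' = v₍α₎ + (α e^{v₍α₎} + α v₍α₎ e^{v₍α₎}) v' in Ω with v' = 0 on ∂Ω, and v' ≤ 0 in Ω, then v' > −1/α in Ω. -/
open MeasureTheory

/-- First partial derivative in direction `i`. -/
noncomputable def pd {n : ℕ} (i : Fin n) (f : EuclideanSpace ℝ (Fin n) → ℝ)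
    (x : EuclideanSpace ℝ (Fin n)) : ℝ :=
  fderiv ℝ f x (EuclideanSpace.single i 1)

/-- Laplacian. -/
noncomputable def lap {n : ℕ} (f : EuclideanSpace ℝ (Fin n) → ℝ)
    (x : EuclideanSpace ℝ (Fin n)) : ℝ :=
  ∑ i, pd i (pd i f) x

/-!
Take a point `x₀` where `v'` attains its minimum over the compact set `closure Ω`. On `∂Ω` the
minimum is `0 > -1/α`. At an interior minimum every pure second partial derivative of `v'` is
nonnegative, so `0 ≤ Δv'(x₀) = v + α eᵛ (1 + v) v'` at `x₀`. If `v'(x₀) ≤ -1/α`, the right-hand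
side would be at most `v - eᵛ (1 + v) ≤ v - (1 + v) = -1` because `v(x₀) ≥ 0`.
-/

open Topology

theorem IsLocalMin.deriv_deriv_nonneg {f : ℝ → ℝ} {x₀ : ℝ} (hmin : IsLocalMin f x₀)
    (hc : ContinuousAt f x₀) : 0 ≤ deriv (deriv f) x₀ := by
  by_contra! hneg
  have hmax : IsLocalMax f x₀ := isLocalMax_of_deriv_deriv_neg hneg hmin.deriv_eq_zero hc
  have hconst : f =ᶠ[𝓝 x₀] fun _ => f x₀ := by
    filter_upwards [hmin, hmax] with y hy₁ hy₂ using le_antisymm hy₂ hy₁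
  have hflat : deriv (deriv f) x₀ = 0 := by
    rw [hconst.deriv.deriv_eq]
    simp
  exact hneg.ne hflat

section Laplacian

variable {n : ℕ} {f : EuclideanSpace ℝ (Fin n) → ℝ}

theorem hasDerivAt_pd_line (i : Fin n) (x : EuclideanSpace ℝ (Fin n)) {t : ℝ}
    (hf : DifferentiableAt ℝ f (x + t • EuclideanSpace.single i 1)) :
    HasDerivAt (fun s : ℝ => f (x + s • EuclideanSpace.single i 1))
      (pd i f (x + t • EuclideanSpace.single i 1)) t := by
  have hline : HasDerivAt (fun s : ℝ => x + s • EuclideanSpace.single i (1 : ℝ))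
      (EuclideanSpace.single i 1) t := by
    simpa using ((hasDerivAt_id t).smul_const (EuclideanSpace.single i (1 : ℝ))).const_add x
  exact hf.hasFDerivAt.comp_hasDerivAt t hline

theorem pd_contDiff {k : WithTop ℕ∞} (i : Fin n) (hf : ContDiff ℝ (k + 1) f) :
    ContDiff ℝ k (pd i f) :=
  (ContinuousLinearMap.apply ℝ ℝ (EuclideanSpace.single i (1 : ℝ))).contDiff.comp
    (f := fun x => fderiv ℝ f x) (hf.fderiv_right le_rfl)

theorem IsLocalMin.pd_pd_nonneg {x₀ : EuclideanSpace ℝ (Fin n)} (hmin : IsLocalMin f x₀)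
    (i : Fin n) (hf : Differentiable ℝ f) (hf' : DifferentiableAt ℝ (pd i f) x₀) :
    0 ≤ pd i (pd i f) x₀ := by
  set g : ℝ → ℝ := fun t => f (x₀ + t • EuclideanSpace.single i 1)
  have hg : deriv g = fun t => pd i f (x₀ + t • EuclideanSpace.single i 1) :=
    funext fun t => (hasDerivAt_pd_line i x₀ (hf _)).deriv
  have hgg : deriv (deriv g) 0 = pd i (pd i f) x₀ := by
    rw [hg]
    exact (hasDerivAt_pd_line i x₀ (by simpa using hf')).deriv.trans (by simp)
  have hline : Continuous fun t : ℝ => x₀ + t • EuclideanSpace.single i (1 : ℝ) := by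
    fun_prop
  have hgmin : IsLocalMin g 0 :=
    IsLocalMin.comp_continuous (b := 0) (by simpa using hmin) hline.continuousAt
  rw [← hgg]
  exact hgmin.deriv_deriv_nonneg (hf.continuous.comp hline).continuousAt

theorem IsLocalMin.lap_nonneg {x₀ : EuclideanSpace ℝ (Fin n)} (hmin : IsLocalMin f x₀)
    (hf : ContDiff ℝ 2 f) : 0 ≤ lap f x₀ :=
  Finset.sum_nonneg fun i _ =>
    hmin.pd_pd_nonneg i (hf.differentiable (by norm_num))
      ((pd_contDiff (k := 1) i hf).differentiable (by norm_num) x₀)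

end Laplacian

theorem exists_le_of_isLocalMin_or_mem_frontier {X α : Type*} [TopologicalSpace X]
    [LinearOrder α] [TopologicalSpace α] [ClosedIicTopology α] {Ω : Set X} (hΩo : IsOpen Ω)
    (hΩc : IsCompact (closure Ω)) {f : X → α} (hf : ContinuousOn f (closure Ω)) {x : X}
    (hx : x ∈ Ω) :
    ∃ x₀, f x₀ ≤ f x ∧ (x₀ ∈ Ω ∧ IsLocalMin f x₀ ∨ x₀ ∈ frontier Ω) := by
  obtain ⟨x₀, hx₀, hmin⟩ := hΩc.exists_isMinOn ⟨x, subset_closure hx⟩ hf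
  refine ⟨x₀, hmin (subset_closure hx), ?_⟩
  by_cases hx₀Ω : x₀ ∈ Ω
  · exact Or.inl ⟨hx₀Ω,
      Filter.mem_of_superset (hΩo.mem_nhds hx₀Ω) fun y hy => hmin (subset_closure hy)⟩
  · exact Or.inr ⟨hx₀, by rwa [hΩo.interior_eq]⟩

theorem neg_one_div_lt_of_nonneg_add_mul_exp {a α w : ℝ} (ha : 0 ≤ a) (hα : 0 < α)
    (h : 0 ≤ a + (α * Real.exp a + α * a * Real.exp a) * w) : -(1 / α) < w := by
  by_contra! hw
  have hαw : α * w ≤ -1 := by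
    calc α * w ≤ α * -(1 / α) := mul_le_mul_of_nonneg_left hw hα.le
      _ = -1 := by field_simp
  have hexp : 1 + a ≤ Real.exp a * (1 + a) :=
    le_mul_of_one_le_left (by linarith) (Real.one_le_exp ha)
  have hneg : a + (α * Real.exp a + α * a * Real.exp a) * w ≤ -1 :=
    calc a + (α * Real.exp a + α * a * Real.exp a) * w
        = a + Real.exp a * (1 + a) * (α * w) := by ring
      _ ≤ a + Real.exp a * (1 + a) * -1 := by gcongr
      _ ≤ -1 := by linarith
  linarith

theorem stmt14_general (n : ℕ) (Ω : Set (EuclideanSpace ℝ (Fin n)))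
    (hΩo : IsOpen Ω) (hΩb : Bornology.IsBounded Ω)
    (α : ℝ) (hα : 0 < α)
    (v : EuclideanSpace ℝ (Fin n) → ℝ)
    (hvnn : ∀ x ∈ closure Ω, 0 ≤ v x)
    (v' : EuclideanSpace ℝ (Fin n) → ℝ) (hv' : ContDiff ℝ 2 v')
    (hpde' : ∀ x ∈ Ω, lap v' x
      = v x + (α * Real.exp (v x) + α * v x * Real.exp (v x)) * v' x)
    (hbc' : ∀ x ∈ frontier Ω, v' x = 0) :
    ∀ x ∈ Ω, v' x > -(1 / α) := by
  intro x hx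
  obtain ⟨x₀, hle, hx₀⟩ := exists_le_of_isLocalMin_or_mem_frontier hΩo hΩb.isCompact_closure
    hv'.continuous.continuousOn hx
  refine lt_of_lt_of_le ?_ hle
  rcases hx₀ with ⟨hx₀Ω, hmin⟩ | hx₀fr
  · have hlap := hmin.lap_nonneg hv'
    rw [hpde' x₀ hx₀Ω] at hlap
    exact neg_one_div_lt_of_nonneg_add_mul_exp (hvnn x₀ (subset_closure hx₀Ω)) hα hlap
  · rw [hbc' x₀ hx₀fr]
    simpa using hα

/-- with `v = v_α ≥ 0` solving `Δv = α v e^v` in `Ω` (boundary datum `v⋆`), if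
`v'` solves the linearized problem `Δv' = v + (α e^v + α v e^v) v'` in `Ω`, `v' = 0` on `∂Ω`,
and `v' ≤ 0` in `Ω`, then `v' > −1/α` in `Ω`. -/
theorem stmt14 (n : ℕ) (Ω : Set (EuclideanSpace ℝ (Fin n)))
    (hΩo : IsOpen Ω) (hΩb : Bornology.IsBounded Ω) (hΩc : IsConnected Ω)
    (α : ℝ) (hα : 0 < α)
    (vstar : EuclideanSpace ℝ (Fin n) → ℝ)
    (hvstarnn : ∀ x ∈ frontier Ω, 0 ≤ vstar x)
    (v : EuclideanSpace ℝ (Fin n) → ℝ) (hv : ContDiff ℝ 2 v)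
    (hvnn : ∀ x ∈ closure Ω, 0 ≤ v x)
    (hpde : ∀ x ∈ Ω, lap v x = α * v x * Real.exp (v x))
    (hbc : ∀ x ∈ frontier Ω, v x = vstar x)
    (v' : EuclideanSpace ℝ (Fin n) → ℝ) (hv' : ContDiff ℝ 2 v')
    (hpde' : ∀ x ∈ Ω, lap v' x
      = v x + (α * Real.exp (v x) + α * v x * Real.exp (v x)) * v' x)
    (hbc' : ∀ x ∈ frontier Ω, v' x = 0)
    (hnp : ∀ x ∈ Ω, v' x ≤ 0) :
    ∀ x ∈ Ω, v' x > -(1 / α) :=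
  stmt14_general n Ω hΩo hΩb α hα v hvnn v' hv' hpde' hbc'
end

section
/- Let v : closure(B_R(0)) → ℝ be a radially symmetric C² solution of Δv = α v e^v on the ball B_R(0) ⊂ ℝⁿ with v ≥ 0, α ≥ 0, and radial derivative vanishing at the origin. Then the radial profile of v is convex on [0,R]; consequently u := α e^v is also convex along radii. -/
/-! For `v(x) = f(‖x‖)` the Laplacian is `f'' + (n-1)/r f'`, so with `m = n - 1` the equation
reads `(r^m f')' = r^m F(f)` for `F(t) = α t e^t`, which is nonnegative and nondecreasing on
`t ≥ 0`. Since `f'(0) = 0`, this gives `f' ≥ 0`, hence `f` and `F ∘ f` are nondecreasing, and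
comparing `s^m F(f(s))` with `s^m F(f(r))` on `[0, r]` gives `f'(r) ≤ r F(f(r)) / (m+1)`.
Therefore `f'' = F(f) - (m/r) f' ≥ F(f) / (m+1) ≥ 0`. Convexity of `α e^f` follows because
`exp` is convex and nondecreasing. -/

open MeasureTheory

open Set

section InnerProductSpace

variable {E : Type*} [NormedAddCommGroup E] [InnerProductSpace ℝ E] {x : E}

theorem hasFDerivAt_norm_of_ne_zero (hx : x ≠ 0) :
    HasFDerivAt (‖·‖) (‖x‖⁻¹ • innerSL ℝ x) x := by
  have h := (hasStrictFDerivAt_norm_sq x).hasFDerivAt.sqrt (by positivity)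
  simp only [Real.sqrt_sq (norm_nonneg _)] at h
  convert h using 1
  ext v
  simp [field]

theorem HasDerivAt.hasFDerivAt_comp_norm {g : ℝ → ℝ} {g' : ℝ} (hg : HasDerivAt g g' ‖x‖)
    (hx : x ≠ 0) : HasFDerivAt (fun y => g ‖y‖) ((g' / ‖x‖) • innerSL ℝ x) x := by
  have h := hg.comp_hasFDerivAt x (hasFDerivAt_norm_of_ne_zero hx)
  rwa [smul_smul, ← div_eq_mul_inv] at h

end InnerProductSpace

section Euclidean

variable {n : ℕ} {x : EuclideanSpace ℝ (Fin n)}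

theorem pd_comp_norm {g : ℝ → ℝ} (hg : DifferentiableAt ℝ g ‖x‖) (hx : x ≠ 0) (i : Fin n) :
    pd i (fun y => g ‖y‖) x = deriv g ‖x‖ / ‖x‖ * x i := by
  simp [pd, (hg.hasDerivAt.hasFDerivAt_comp_norm hx).fderiv, EuclideanSpace.inner_single_right]

theorem pd_comp_norm_mul_coord {φ : ℝ → ℝ} (hφ : DifferentiableAt ℝ φ ‖x‖) (hx : x ≠ 0)
    (i : Fin n) :
    pd i (fun y => φ ‖y‖ * y i) x = deriv φ ‖x‖ / ‖x‖ * x i * x i + φ ‖x‖ := by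
  have h : HasFDerivAt (fun y => φ ‖y‖ * y i) _ x :=
    (hφ.hasDerivAt.hasFDerivAt_comp_norm hx).mul (EuclideanSpace.proj (𝕜 := ℝ) i).hasFDerivAt
  simp only [pd, h.fderiv, add_apply, smul_apply, PiLp.proj_apply, PiLp.single_eq_same,
    smul_eq_mul, mul_one, coe_innerSL_apply, EuclideanSpace.inner_single_right,
    Real.ringHom_apply, one_mul]
  ring

theorem lap_comp_norm {f : ℝ → ℝ} (hf : ContDiff ℝ 2 f) (hx : x ≠ 0) :
    lap (fun y => f ‖y‖) x = deriv (deriv f) ‖x‖ + (n - 1) / ‖x‖ * deriv f ‖x‖ := by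
  have hr : ‖x‖ ≠ 0 := norm_ne_zero_iff.mpr hx
  have hf1 : Differentiable ℝ f := hf.differentiable two_ne_zero
  have hf2 : Differentiable ℝ (deriv f) := (hf.deriv' (n := 1)).differentiable one_ne_zero
  set φ : ℝ → ℝ := fun r => deriv f r / r
  have hφ : HasDerivAt φ ((deriv (deriv f) ‖x‖ * ‖x‖ - deriv f ‖x‖ * 1) / ‖x‖ ^ 2) ‖x‖ :=
    (hf2 _).hasDerivAt.div (hasDerivAt_id' ‖x‖) hr
  have hpd (i : Fin n) : pd i (fun y => f ‖y‖) =ᶠ[nhds x] fun y => φ ‖y‖ * y i := by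
    filter_upwards [isOpen_ne.mem_nhds hx] with y hy
    rw [pd_comp_norm (hf1 _) hy]
  have hpd2 (i : Fin n) : pd i (pd i fun y => f ‖y‖) x
      = deriv φ ‖x‖ / ‖x‖ * x i * x i + φ ‖x‖ := by
    rw [← pd_comp_norm_mul_coord hφ.differentiableAt hx]
    simp only [pd, (hpd i).fderiv_eq]
  simp only [lap, hpd2, Finset.sum_add_distrib, Finset.sum_const, Finset.card_univ,
    Fintype.card_fin, nsmul_eq_mul, mul_assoc, ← Finset.mul_sum, ← sq,
    ← EuclideanSpace.real_norm_sq_eq, hφ.deriv, φ]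
  field_simp
  ring

end Euclidean

section RadialODE

variable {f g : ℝ → ℝ} {m : ℕ} {R : ℝ}

theorem hasDerivAt_pow_mul_deriv (hf : ContDiff ℝ 2 f) {r : ℝ} (hr : r ≠ 0) :
    HasDerivAt (fun s => s ^ m * deriv f s)
      (r ^ m * (deriv (deriv f) r + m / r * deriv f r)) r := by
  have hf2 : Differentiable ℝ (deriv f) := (hf.deriv' (n := 1)).differentiable one_ne_zero
  have h : HasDerivAt (fun s => s ^ m * deriv f s) _ r :=
    (hasDerivAt_pow m r).mul (hf2 r).hasDerivAt
  convert h using 1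
  cases m with
  | zero => simp
  | succ k => rw [Nat.add_sub_cancel]; field_simp; ring

theorem deriv_nonneg_of_radial_ode (hf : ContDiff ℝ 2 f) (hf0 : deriv f 0 = 0)
    (hode : ∀ r ∈ Ioo 0 R, deriv (deriv f) r + m / r * deriv f r = g r)
    (hg : ∀ r ∈ Ioo 0 R, 0 ≤ g r) : ∀ r ∈ Icc 0 R, 0 ≤ deriv f r := by
  have hmono : MonotoneOn (fun s => s ^ m * deriv f s) (Icc 0 R) := by
    refine monotoneOn_of_hasDerivWithinAt_nonneg (convex_Icc 0 R)
      ((continuous_pow m).mul (hf.continuous_deriv one_le_two)).continuousOn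
      (fun r hr => ?_) (fun r hr => ?_) (f' := fun r => r ^ m * g r)
    all_goals rw [interior_Icc] at hr
    · rw [← hode r hr]
      exact (hasDerivAt_pow_mul_deriv hf hr.1.ne').hasDerivWithinAt
    · exact mul_nonneg (pow_nonneg hr.1.le m) (hg r hr)
  intro r hr
  rcases hr.1.eq_or_lt with rfl | hr0
  · exact hf0.ge
  · have h := hmono ⟨le_rfl, hr.1.trans hr.2⟩ hr hr.1
    simp only [hf0, mul_zero] at h
    exact (mul_nonneg_iff_of_pos_left (pow_pos hr0 m)).mp h

theorem deriv_le_of_radial_ode (hf : ContDiff ℝ 2 f) (hf0 : deriv f 0 = 0)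
    (hode : ∀ r ∈ Ioo 0 R, deriv (deriv f) r + m / r * deriv f r = g r)
    (hg : MonotoneOn g (Ioo 0 R)) {r : ℝ} (hr : r ∈ Ioo 0 R) :
    deriv f r ≤ r * g r / (m + 1) := by
  have hanti : AntitoneOn (fun s => s ^ m * deriv f s - g r * (s ^ (m + 1) / (m + 1)))
      (Icc 0 r) := by
    refine antitoneOn_of_hasDerivWithinAt_nonpos (convex_Icc 0 r)
      (((continuous_pow m).mul (hf.continuous_deriv one_le_two)).sub
        (by fun_prop)).continuousOn (fun s hs => ?_) (fun s hs => ?_)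
      (f' := fun s => s ^ m * (g s - g r))
    all_goals rw [interior_Icc] at hs
    · have h : HasDerivAt (fun s => s ^ m * deriv f s - g r * (s ^ (m + 1) / (m + 1))) _ s :=
        (hasDerivAt_pow_mul_deriv hf hs.1.ne').sub
          (((hasDerivAt_pow (m + 1) s).div_const (m + 1)).const_mul (g r))
      rw [hode s ⟨hs.1, hs.2.trans hr.2⟩] at h
      refine (h.congr_deriv ?_).hasDerivWithinAt
      rw [Nat.add_sub_cancel]
      push_cast
      field_simp
    · exact mul_nonpos_of_nonneg_of_nonpos (pow_nonneg hs.1.le m)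
        (sub_nonpos.2 (hg ⟨hs.1, hs.2.trans hr.2⟩ hr hs.2.le))
  have h := hanti ⟨le_rfl, hr.1.le⟩ ⟨hr.1.le, le_rfl⟩ hr.1.le
  dsimp only at h
  rw [hf0, zero_pow m.succ_ne_zero, mul_zero, zero_div, mul_zero, sub_zero, sub_nonpos] at h
  refine le_of_mul_le_mul_left ?_ (pow_pos hr.1 m)
  calc r ^ m * deriv f r ≤ g r * (r ^ (m + 1) / (m + 1)) := h
    _ = r ^ m * (r * g r / (m + 1)) := by ring

theorem deriv2_nonneg_of_radial_ode (hf : ContDiff ℝ 2 f) (hf0 : deriv f 0 = 0)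
    (hode : ∀ r ∈ Ioo 0 R, deriv (deriv f) r + m / r * deriv f r = g r)
    (hg0 : ∀ r ∈ Ioo 0 R, 0 ≤ g r) (hg : MonotoneOn g (Ioo 0 R)) :
    ∀ r ∈ Ioo 0 R, 0 ≤ deriv (deriv f) r := by
  intro r hr
  have hgr := hg0 r hr
  have hdamp : m / r * deriv f r ≤ m / (m + 1) * g r := calc
    m / r * deriv f r ≤ m / r * (r * g r / (m + 1)) :=
      mul_le_mul_of_nonneg_left (deriv_le_of_radial_ode hf hf0 hode hg hr)
        (div_nonneg m.cast_nonneg hr.1.le)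
    _ = m / (m + 1) * g r := by field_simp [hr.1.ne']
  have hfrac : (m : ℝ) / (m + 1) ≤ 1 := (div_le_one (by positivity)).2 (by linarith)
  nlinarith [hode r hr]

theorem convexOn_Icc_of_radial_ode {F : ℝ → ℝ}
    (hF0 : ∀ t, 0 ≤ t → 0 ≤ F t) (hF : MonotoneOn F (Ici 0))
    (hf : ContDiff ℝ 2 f) (hf0 : deriv f 0 = 0) (hfnn : ∀ r ∈ Icc 0 R, 0 ≤ f r)
    (hode : ∀ r ∈ Ioo 0 R, deriv (deriv f) r + m / r * deriv f r = F (f r)) :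
    ConvexOn ℝ (Icc 0 R) f := by
  have hf1 : Differentiable ℝ f := hf.differentiable two_ne_zero
  have hf2 : Differentiable ℝ (deriv f) := (hf.deriv' (n := 1)).differentiable one_ne_zero
  have hsource : ∀ r ∈ Ioo 0 R, 0 ≤ F (f r) := fun r hr =>
    hF0 _ (hfnn r (Ioo_subset_Icc_self hr))
  have hmono : MonotoneOn f (Icc 0 R) :=
    monotoneOn_of_deriv_nonneg (convex_Icc 0 R) hf1.continuous.continuousOn
      hf1.differentiableOn fun r hr =>
        deriv_nonneg_of_radial_ode hf hf0 hode hsource r (interior_subset hr)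
  have hsource_mono : MonotoneOn (fun r => F (f r)) (Ioo 0 R) :=
    hF.comp (hmono.mono Ioo_subset_Icc_self) fun r hr => hfnn r (Ioo_subset_Icc_self hr)
  refine convexOn_of_deriv2_nonneg (convex_Icc 0 R) hf1.continuous.continuousOn
    hf1.differentiableOn hf2.differentiableOn fun r hr => ?_
  rw [interior_Icc] at hr
  simpa using deriv2_nonneg_of_radial_ode hf hf0 hode hsource hsource_mono r hr

end RadialODE

theorem ConvexOn.exp {E : Type*} [AddCommMonoid E] [Module ℝ E] {s : Set E} {f : E → ℝ}
    (hf : ConvexOn ℝ s f) : ConvexOn ℝ s fun x => Real.exp (f x) :=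
  ⟨hf.1, fun _ hx _ hy _ _ ha hb hab => (Real.exp_le_exp.2 (hf.2 hx hy ha hb hab)).trans
    (convexOn_exp.2 (mem_univ _) (mem_univ _) ha hb hab)⟩

theorem stmt18_general (n : ℕ) (hn : 1 ≤ n) (R : ℝ) (α : ℝ) (hα : 0 ≤ α)
    (f : ℝ → ℝ) (hf : ContDiff ℝ 2 f) (hf0 : deriv f 0 = 0)
    (hfnn : ∀ r ∈ Set.Icc (0:ℝ) R, 0 ≤ f r)
    (hpde : ∀ x ∈ Metric.ball (0 : EuclideanSpace ℝ (Fin n)) R,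
      lap (fun y : EuclideanSpace ℝ (Fin n) => f ‖y‖) x
        = α * f ‖x‖ * Real.exp (f ‖x‖)) :
    ConvexOn ℝ (Set.Icc 0 R) f ∧
    ConvexOn ℝ (Set.Icc 0 R) (fun r => α * Real.exp (f r)) := by
  obtain ⟨m, rfl⟩ := Nat.exists_eq_add_of_le' hn
  have hode : ∀ r ∈ Ioo 0 R,
      deriv (deriv f) r + m / r * deriv f r = α * f r * Real.exp (f r) := by
    intro r hr
    have hx : ‖EuclideanSpace.single (0 : Fin (m + 1)) r‖ = r := by simp [hr.1.le]
    have h := hpde _ (mem_ball_zero_iff.2 (hx ▸ hr.2))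
    rw [lap_comp_norm hf (by rw [← norm_ne_zero_iff, hx]; exact hr.1.ne'), hx] at h
    simpa using h
  have hF : MonotoneOn (fun t => α * t * Real.exp t) (Ici 0) := fun s hs t _ hst => by
    dsimp only
    have ht : 0 ≤ α * t := mul_nonneg hα (le_trans hs hst)
    gcongr
  have hconv := convexOn_Icc_of_radial_ode (fun t ht => by positivity) hF hf hf0 hfnn hode
  exact ⟨hconv, hconv.exp.smul hα⟩

/-- a radially symmetric, nonnegative `C²` solution `v(x) = f(‖x‖)` of
`Δv = α v e^v` on the ball `B_R(0)` with `f'(0) = 0` has a convex radial profile `f` on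
`[0,R]`; consequently the radial profile of `u = α e^v` is convex as well. -/
theorem stmt18 (n : ℕ) (hn : 1 ≤ n) (R : ℝ) (hR : 0 < R) (α : ℝ) (hα : 0 ≤ α)
    (f : ℝ → ℝ) (hf : ContDiff ℝ 2 f) (hf0 : deriv f 0 = 0)
    (hfnn : ∀ r ∈ Set.Icc (0:ℝ) R, 0 ≤ f r)
    (hpde : ∀ x ∈ Metric.ball (0 : EuclideanSpace ℝ (Fin n)) R,
      lap (fun y : EuclideanSpace ℝ (Fin n) => f ‖y‖) x
        = α * f ‖x‖ * Real.exp (f ‖x‖)) :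
    ConvexOn ℝ (Set.Icc 0 R) f ∧
    ConvexOn ℝ (Set.Icc 0 R) (fun r => α * Real.exp (f r)) :=
  stmt18_general n hn R α hα f hf hf0 hfnn hpde
end
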